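/- In the setting of the previous construction, for all x,y in the space: d^×(x,y) ≤ ω^{-1}(d_*(x,y)), where ω(τ) := τ + 2e^{-τ/2} - 2. More precisely, ω(d^×(x,y)) ≤ d_*(x,y). -/

import Mathlib

/-! Each orbit moves at unit speed, so `d^×(r⁺x, r⁺y) ≥ τ - 2|r|` with `τ = d^×(x, y)`. This tent
is nonnegative exactly on `|r| ≤ τ/2`, and its integral there against the Laplace weight
`e^{-|r|}/2` is `ω(τ)`; the rest of the (nonnegative) integrand of `d_*` only adds to it. -/

open MeasureTheory

/-- The averaged pseudometric d_*(x,y) := ∫ d^×(r⁺x, r⁺y)·(e^{-|r|}/2) dr,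
where the ℝ-action is given by T. -/
noncomputable def dstar {Y : Type*} [PseudoMetricSpace Y]
    (T : ℝ → Y → Y) (x y : Y) : ℝ :=
  ∫ r : ℝ, dist (T r x) (T r y) * (Real.exp (-|r|) / 2)

open Real Set Filter

theorem integrable_comp_abs_of_integrableOn_Ioi {E : Type*} [NormedAddCommGroup E] {f : ℝ → E}
    (hf : IntegrableOn f (Ioi 0)) : Integrable fun x => f |x| := by
  have hIoi : IntegrableOn (fun x => f |x|) (Ioi 0) :=
    hf.congr_fun (fun x hx => by rw [abs_of_pos (mem_Ioi.mp hx)]) measurableSet_Ioi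
  have hIic : IntegrableOn (fun x => f |x|) (Iic 0) := by
    rw [← Measure.map_neg_eq_self (volume : Measure ℝ),
      measurableEmbedding_neg.integrableOn_map_iff]
    simp_rw [Function.comp_def, abs_neg, neg_preimage, neg_Iic, neg_zero]
    exact (integrableOn_Ici_iff_integrableOn_Ioi (by simp)).mpr hIoi
  simpa using hIic.union hIoi

theorem integrable_add_mul_abs_mul_exp_neg_abs (a b : ℝ) :
    Integrable fun r : ℝ => (a + b * |r|) * exp (-|r|) := by
  refine integrable_comp_abs_of_integrableOn_Ioi (f := fun r => (a + b * r) * exp (-r)) ?_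
  have hexp : IntegrableOn (fun r : ℝ => exp (-r)) (Ioi 0) := by
    simpa using exp_neg_integrableOn_Ioi 0 one_pos
  have hid : IntegrableOn (fun r : ℝ => r * exp (-r)) (Ioi 0) := by
    simpa using integrableOn_rpow_mul_exp_neg_rpow (s := 1) (p := 1) (by norm_num) one_pos
  refine IntegrableOn.congr_fun ((hexp.const_mul a).add (hid.const_mul b)) (fun r _ => ?_)
    measurableSet_Ioi
  simp only [Pi.add_apply]
  ring

theorem intervalIntegral_comp_abs_eq_two_mul {f : ℝ → ℝ} (hf : Continuous f) {a : ℝ} (ha : 0 ≤ a) :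
    ∫ r in -a..a, f |r| = 2 * ∫ r in 0..a, f r := by
  have hint (b c : ℝ) : IntervalIntegrable (fun r => f |r|) volume b c :=
    (hf.comp continuous_abs).intervalIntegrable b c
  have hneg : ∫ r in -a..0, f |r| = ∫ r in 0..a, f |r| := by
    simpa [abs_neg] using
      (intervalIntegral.integral_comp_neg (a := 0) (b := a) fun r => f |r|).symm
  have habs : ∫ r in 0..a, f |r| = ∫ r in 0..a, f r :=
    intervalIntegral.integral_congr fun r hr => by
      rw [uIcc_of_le ha] at hr
      rw [abs_of_nonneg hr.1]
  rw [← intervalIntegral.integral_add_adjacent_intervals (hint (-a) 0) (hint 0 a), hneg, habs]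
  ring

theorem integral_sub_mul_exp_neg (a : ℝ) :
    ∫ r in 0..a, (a - r) * exp (-r) = a - 1 + exp (-a) := by
  have hderiv (r : ℝ) : HasDerivAt (fun r => (r - a + 1) * exp (-r)) ((a - r) * exp (-r)) r := by
    refine ((((hasDerivAt_id' r).sub_const a).add_const 1).fun_mul
      (hasDerivAt_neg r).exp).congr_deriv ?_
    ring
  rw [intervalIntegral.integral_eq_sub_of_hasDerivAt (fun r _ => hderiv r)
    ((by fun_prop : Continuous fun r => (a - r) * exp (-r)).intervalIntegrable _ _)]
  simp only [sub_self, zero_add, one_mul, zero_sub, neg_zero, exp_zero, mul_one]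
  ring

theorem integral_tent_mul_exp_neg_abs {τ : ℝ} (hτ : 0 ≤ τ) :
    ∫ r in -(τ / 2)..τ / 2, (τ - 2 * |r|) * (exp (-|r|) / 2) = τ + 2 * exp (-τ / 2) - 2 := by
  have hhalf : ∫ r in 0..τ / 2, (τ - 2 * r) * (exp (-r) / 2) = τ / 2 - 1 + exp (-(τ / 2)) := by
    rw [← integral_sub_mul_exp_neg]
    congr 1 with r
    ring
  rw [intervalIntegral_comp_abs_eq_two_mul (f := fun t => (τ - 2 * t) * (exp (-t) / 2))
    (by fun_prop) (by positivity), hhalf, neg_div]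
  ring

section Flow

variable {Y : Type*} [PseudoMetricSpace Y] {T : ℝ → Y → Y}

theorem lipschitzWith_one_orbit (horb : ∀ (x : Y) (r₁ r₂ : ℝ), dist (T r₁ x) (T r₂ x) ≤ |r₁ - r₂|)
    (x : Y) : LipschitzWith 1 fun r => T r x :=
  LipschitzWith.of_dist_le_mul fun r₁ r₂ => by simpa [Real.dist_eq] using horb x r₁ r₂

theorem abs_dist_apply_sub_dist_le (h0 : ∀ x, T 0 x = x)
    (horb : ∀ (x : Y) (r₁ r₂ : ℝ), dist (T r₁ x) (T r₂ x) ≤ |r₁ - r₂|) (r : ℝ) (x y : Y) :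
    |dist (T r x) (T r y) - dist x y| ≤ 2 * |r| := by
  have hmove (z : Y) : dist (T r z) z ≤ |r| := by simpa [h0] using horb z r 0
  calc |dist (T r x) (T r y) - dist x y| = dist (dist (T r x) (T r y)) (dist x y) :=
        (Real.dist_eq _ _).symm
    _ ≤ dist (T r x) x + dist (T r y) y := dist_dist_dist_le _ _ _ _
    _ ≤ 2 * |r| := by linarith [hmove x, hmove y]

theorem integrable_dist_apply_mul_exp_neg_abs (h0 : ∀ x, T 0 x = x)
    (horb : ∀ (x : Y) (r₁ r₂ : ℝ), dist (T r₁ x) (T r₂ x) ≤ |r₁ - r₂|) (x y : Y) :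
    Integrable fun r => dist (T r x) (T r y) * (exp (-|r|) / 2) := by
  have hcont : Continuous fun r => dist (T r x) (T r y) * (exp (-|r|) / 2) :=
    ((lipschitzWith_one_orbit horb x).continuous.dist
      (lipschitzWith_one_orbit horb y).continuous).mul (by fun_prop)
  refine ((integrable_add_mul_abs_mul_exp_neg_abs (dist x y) 2).div_const 2).mono'
    hcont.aestronglyMeasurable (Eventually.of_forall fun r => ?_)
  rw [norm_of_nonneg (by positivity), mul_div_assoc]
  gcongr
  linarith [(abs_sub_le_iff.mp (abs_dist_apply_sub_dist_le h0 horb r x y)).1]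

end Flow

theorem omega_dcross_le_dstar_general {Y : Type*} [PseudoMetricSpace Y]
    (T : ℝ → Y → Y)
    (h0 : ∀ x, T 0 x = x)
    (horb : ∀ (x : Y) (r₁ r₂ : ℝ), dist (T r₁ x) (T r₂ x) ≤ |r₁ - r₂|)
    (x y : Y) :
    dist x y + 2 * Real.exp (-(dist x y) / 2) - 2 ≤ dstar T x y := by
  set τ := dist x y
  have hτ : 0 ≤ τ := dist_nonneg
  have hint := integrable_dist_apply_mul_exp_neg_abs h0 horb x y
  calc τ + 2 * exp (-τ / 2) - 2
      = ∫ r in -(τ / 2)..τ / 2, (τ - 2 * |r|) * (exp (-|r|) / 2) :=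
        (integral_tent_mul_exp_neg_abs hτ).symm
    _ ≤ ∫ r in -(τ / 2)..τ / 2, dist (T r x) (T r y) * (exp (-|r|) / 2) := by
        refine intervalIntegral.integral_mono_on (by linarith)
          ((by fun_prop : Continuous fun r => (τ - 2 * |r|) * (exp (-|r|) / 2)).intervalIntegrable
            _ _) hint.intervalIntegrable fun r _ => ?_
        gcongr
        linarith [(abs_sub_le_iff.mp (abs_dist_apply_sub_dist_le h0 horb r x y)).2]
    _ ≤ dstar T x y := by
        rw [intervalIntegral.integral_of_le (by linarith)]
        exact setIntegral_le_integral hint (Eventually.of_forall fun r => by positivity)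

/-- ω(d^×(x,y)) ≤ d_*(x,y) where ω(τ) = τ + 2e^{-τ/2} - 2. -/
theorem omega_dcross_le_dstar {Y : Type*} [PseudoMetricSpace Y]
    (T : ℝ → Y → Y)
    (h0 : ∀ x, T 0 x = x)
    (hadd : ∀ (r s : ℝ) (x : Y), T (r + s) x = T r (T s x))
    (horb : ∀ (x : Y) (r₁ r₂ : ℝ), dist (T r₁ x) (T r₂ x) ≤ |r₁ - r₂|)
    (x y : Y) :
    dist x y + 2 * Real.exp (-(dist x y) / 2) - 2 ≤ dstar T x y :=
  omega_dcross_le_dstar_general T h0 horb x y
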